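/- Fix r ≥ 1 and let (v_1,…,v_r) be a system of linear functionals on ℂ[x] with ⟨v_j, 1⟩ = 1 for all j, admitting a sequence of formal power series (g_k)_{k∈ℕ} with constant coefficient 1 and a sequence (α_k)_{k∈ℕ} of nonzero complex numbers such that g_0 = 1, g_j = Σ_{n≥0}⟨v_j, x^n⟩t^n for 1 ≤ j ≤ r, and g_{k+1} − g_k = α_k t g_{k+r+1} for all k. Let (P_n)_{n∈ℕ} be the polynomial sequence defined by P_j(x) = x^j for 0 ≤ j ≤ r and P_{n+r+1}(x) = x P_{n+r}(x) − α_n P_n(x) for all n ∈ ℕ. Then for every n ∈ ℕ and 0 ≤ j ≤ r there exists a polynomial P^{[j]}_n with P_{(r+1)n+j}(x) = x^j · P^{[j]}_n(x^{r+1}), and for each 0 ≤ j ≤ r the sequence (P^{[j]}_n)_{n∈ℕ} is r-orthogonal with respect to the system V^{[j]} := (v_{j+1},…,v_r, x·v_1,…,x·v_j). -/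

import Mathlib

/-!
Write `M c z` for the `z`-th coefficient of `g c`, extended by zero to `z < 0`; then
`⟨v_j, x^m⟩ = M (j + 1) m` and the recurrence for `g` reads
`M (c + 1) z = M c z + α c * M (c + r + 1) (z - 1)`. Read at the indices `(r + 1) n + j`, the
recurrence of `P` becomes `P^{[0]}_{n+1} = x P^{[r]}_n - α P^{[0]}_n` and
`P^{[j+1]}_{n+1} = P^{[j]}_{n+1} - α P^{[j+1]}_n`.

Pair `P^{[j]}_n` with row `c` of `M` shifted by `s` and call `r s + c - j` the weight. The pairing
vanishes at weights in `[1, n]` and is a product of `α`'s at weight `n + 1`. Vanishing follows by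
induction on `(n, j)` from the component recurrences, the two leading values cancelling at the top
weight. The leading value follows by induction on `n + s` from the moment recurrence, which lowers
the row by one (a vanishing pairing) and trades row `c + r` against shift `s - 1`; this is where
negative shifts, hence moments indexed by `ℤ`, come in. Finally the `i`-th functional of `V^{[j]}`
tested against `x^k` is such a pairing, of weight `r k + i + 1`.
-/

open Polynomial Finset

noncomputable section

/-- A linear functional on `ℂ[x]`. -/
abbrev LF := Polynomial ℂ →ₗ[ℂ] ℂ

/-- `x·u` is the functional `p ↦ ⟨u, x p⟩`. -/
def xMul (u : LF) : LF := u.comp (LinearMap.mulLeft ℂ (Polynomial.X : Polynomial ℂ))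

/-- The Darboux-transformed system `V^{[j]} = (v_{j+1},…,v_r, x·v_1,…,x·v_j)`. -/
def Vsys (r j : ℕ) (v : ℕ → LF) : ℕ → LF :=
  fun i => if j + i < r then v (j + i) else xMul (v (j + i - r))

/-- `Q` is `r`-orthogonal with respect to the system `w` (0-indexed:
`⟨w_j, x^k Q_n⟩ = 0` whenever `n ≥ rk+j` and `≠ 0` whenever `n = rk+j−1`,
paper-`j` 1-indexed). -/
def rOrth (r : ℕ) (w : ℕ → LF) (Q : ℕ → Polynomial ℂ) : Prop :=
  (∀ n, (Q n).Monic ∧ (Q n).natDegree = n) ∧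
  ∀ k j n, j < r →
    (r * k + j < n → w j (Polynomial.X ^ k * Q n) = 0) ∧
    (r * k + j = n → w j (Polynomial.X ^ k * Q n) ≠ 0)

namespace BranchedStieltjes

/-- `shiftPairing μ s (X ^ m) = μ (m + s)`: the functional with moments `μ` tested against
`X ^ s * p`. For `s < 0` this is meant for `μ` vanishing on negative indices, so that the terms
pushed below degree `0` are dropped. -/
def shiftPairing (μ : ℤ → ℂ) (s : ℤ) : ℂ[X] →ₗ[ℂ] ℂ :=
  lsum fun m => μ (m + s) • LinearMap.id

@[simp]
lemma shiftPairing_monomial (μ : ℤ → ℂ) (s : ℤ) (m : ℕ) (a : ℂ) :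
    shiftPairing μ s (monomial m a) = μ (m + s) * a := by
  simp [shiftPairing]

lemma shiftPairing_X_pow (μ : ℤ → ℂ) (s : ℤ) (m : ℕ) : shiftPairing μ s (X ^ m) = μ (m + s) := by
  simp [← monomial_one_right_eq_X_pow]

lemma shiftPairing_X_mul (μ : ℤ → ℂ) (s : ℤ) (p : ℂ[X]) :
    shiftPairing μ s (X * p) = shiftPairing μ (s + 1) p := by
  suffices (shiftPairing μ s).comp (LinearMap.mulLeft ℂ X) = shiftPairing μ (s + 1) from
    LinearMap.congr_fun this p
  ext m
  simp [X_mul_monomial, add_assoc, add_comm (1 : ℤ)]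

lemma shiftPairing_eq_zero (μ : ℤ → ℂ) (s : ℤ) (hμ : ∀ z, s ≤ z → μ z = 0) (p : ℂ[X]) :
    shiftPairing μ s p = 0 := by
  suffices shiftPairing μ s = 0 from LinearMap.congr_fun this p
  ext m
  simp [hμ (m + s) (by omega)]

lemma shiftPairing_of_monic (μ : ℤ → ℂ) (hneg : ∀ z < 0, μ z = 0) (h0 : μ 0 = 1) {p : ℂ[X]}
    (hp : p.Monic) : shiftPairing μ (-p.natDegree) p = 1 := by
  rw [shiftPairing, lsum_apply, sum_def, Finset.sum_eq_single p.natDegree]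
  · simp [hp.coeff_natDegree, h0]
  · intro m hm hne
    have : m < p.natDegree := lt_of_le_of_ne (le_natDegree_of_mem_supp m hm) hne
    simp [hneg (m + -p.natDegree) (by omega)]
  · simp [hp.ne_zero]

lemma shiftPairing_eq_add (μ ν ρ : ℤ → ℂ) (a : ℂ) (h : ∀ z, μ z = ν z + a * ρ (z - 1)) (s : ℤ) :
    shiftPairing μ s = shiftPairing ν s + a • shiftPairing ρ (s - 1) := by
  ext m
  simp only [LinearMap.comp_apply, shiftPairing_monomial, LinearMap.add_apply,
    LinearMap.smul_apply, h, smul_eq_mul]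
  ring_nf

lemma apply_X_pow_mul_eq_shiftPairing (u : ℂ[X] →ₗ[ℂ] ℂ) (μ : ℤ → ℂ)
    (hu : ∀ m : ℕ, u (X ^ m) = μ m) (k : ℕ) (p : ℂ[X]) :
    u (X ^ k * p) = shiftPairing μ k p := by
  suffices u.comp (LinearMap.mulLeft ℂ (X ^ k)) = shiftPairing μ k from LinearMap.congr_fun this p
  ext m
  simp only [LinearMap.comp_apply, LinearMap.mulLeft_apply, monomial_one_right_eq_X_pow,
    ← pow_add, hu, shiftPairing_X_pow]
  push_cast
  ring_nf

/-- `componentPoly r α n j` is `P^{[j]}_n`; the recurrence is that of `P` read off at the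
indices `(r + 1) * (n + 1) + j`. -/
def componentPoly (r : ℕ) (α : ℕ → ℂ) : ℕ → ℕ → ℂ[X]
  | 0, _ => 1
  | n + 1, 0 => X * componentPoly r α n r - C (α ((r + 1) * n)) * componentPoly r α n 0
  | n + 1, j + 1 =>
    componentPoly r α (n + 1) j - C (α ((r + 1) * n + (j + 1))) * componentPoly r α n (j + 1)

lemma monic_sub_C_mul {R : Type*} [Ring R] {p q : R[X]} (hp : p.Monic)
    (h : q.natDegree < p.natDegree) (a : R) :
    (p - C a * q).Monic ∧ (p - C a * q).natDegree = p.natDegree := by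
  have hlt : (C a * q).natDegree < p.natDegree := (natDegree_C_mul_le a q).trans_lt h
  exact ⟨hp.sub_of_left (degree_lt_degree hlt), natDegree_sub_eq_left_of_natDegree_lt hlt⟩

lemma componentPoly_monic_natDegree (r : ℕ) (α : ℕ → ℂ) (n j : ℕ) :
    (componentPoly r α n j).Monic ∧ (componentPoly r α n j).natDegree = n := by
  induction n generalizing j with
  | zero => simp [componentPoly]
  | succ n ih =>
    induction j with
    | zero =>
      have hX : (X * componentPoly r α n r).Monic := monic_X.mul (ih r).1
      have hdeg : (X * componentPoly r α n r).natDegree = n + 1 := by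
        rw [natDegree_mul X_ne_zero (ih r).1.ne_zero, natDegree_X, (ih r).2, add_comm]
      have h := monic_sub_C_mul hX (by rw [(ih 0).2, hdeg]; omega) (α ((r + 1) * n))
      rwa [hdeg, ← componentPoly] at h
    | succ j ihj =>
      have h := monic_sub_C_mul ihj.1 (by rw [(ih (j + 1)).2, ihj.2]; omega)
        (α ((r + 1) * n + (j + 1)))
      rwa [ihj.2, ← componentPoly] at h

lemma eq_X_pow_mul_componentPoly_comp {r : ℕ} {α : ℕ → ℂ} {P : ℕ → ℂ[X]}
    (hPinit : ∀ j, j ≤ r → P j = X ^ j)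
    (hPrec : ∀ n, P (n + r + 1) = X * P (n + r) - C (α n) * P n) (n : ℕ) :
    ∀ j, j ≤ r → P ((r + 1) * n + j) = X ^ j * (componentPoly r α n j).comp (X ^ (r + 1)) := by
  induction n with
  | zero => intro j hj; simp [hPinit j hj, componentPoly]
  | succ n ih =>
    intro j
    induction j with
    | zero =>
      intro _
      have h0 := ih 0 (Nat.zero_le r)
      rw [add_zero] at h0
      rw [show (r + 1) * (n + 1) + 0 = (r + 1) * n + r + 1 by ring, hPrec, ih r le_rfl, h0,
        componentPoly]
      simp only [sub_comp, mul_comp, X_comp, C_comp, pow_zero, one_mul, pow_succ]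
      ring
    | succ j ihj =>
      intro hj
      rw [show (r + 1) * (n + 1) + (j + 1) = (r + 1) * n + (j + 1) + r + 1 by ring, hPrec,
        show (r + 1) * n + (j + 1) + r = (r + 1) * (n + 1) + j by ring, ihj (by omega),
        ih (j + 1) hj, componentPoly]
      simp only [sub_comp, mul_comp, C_comp, pow_succ]
      ring

/-- The coefficient relations of `g 0 = 1`, `constantCoeff (g c) = 1` and
`g (c + 1) = g c + α c • t • g (c + r + 1)`, for coefficient tables indexed by `ℤ` and extended
by zero to negative indices. -/
structure IsMomentTable (r : ℕ) (α : ℕ → ℂ) (M : ℕ → ℤ → ℂ) : Prop where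
  zero_row : ∀ z, 0 < z → M 0 z = 0
  at_zero : ∀ c, M c 0 = 1
  of_neg : ∀ c z, z < 0 → M c z = 0
  succ : ∀ c z, M (c + 1) z = M c z + α c * M (c + r + 1) (z - 1)

def momentTable (g : ℕ → PowerSeries ℂ) (c : ℕ) (z : ℤ) : ℂ :=
  if 0 ≤ z then PowerSeries.coeff z.toNat (g c) else 0

@[simp]
lemma momentTable_natCast (g : ℕ → PowerSeries ℂ) (c m : ℕ) :
    momentTable g c m = PowerSeries.coeff m (g c) := by
  simp [momentTable]

@[simp]
lemma momentTable_zero (g : ℕ → PowerSeries ℂ) (c : ℕ) :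
    momentTable g c 0 = PowerSeries.constantCoeff (g c) := by
  simp [momentTable]

lemma momentTable_of_neg (g : ℕ → PowerSeries ℂ) (c : ℕ) {z : ℤ} (hz : z < 0) :
    momentTable g c z = 0 := by
  simp [momentTable, hz]

lemma isMomentTable_momentTable {r : ℕ} {α : ℕ → ℂ} {g : ℕ → PowerSeries ℂ}
    (hgc : ∀ k, PowerSeries.constantCoeff (g k) = 1) (hg0 : g 0 = 1)
    (hrec : ∀ k, g (k + 1) - g k = PowerSeries.C (α k) * PowerSeries.X * g (k + r + 1)) :
    IsMomentTable r α (momentTable g) where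
  zero_row z hz := by
    lift z to ℕ using hz.le
    simp [hg0, PowerSeries.coeff_one, (show z ≠ 0 by omega)]
  at_zero c := by simpa using hgc c
  of_neg c z hz := momentTable_of_neg g c hz
  succ c z := by
    rcases lt_trichotomy z 0 with hz | rfl | hz
    · simp [momentTable_of_neg, hz, show z - 1 < 0 by omega]
    · simp [hgc, momentTable_of_neg]
    · obtain ⟨m, rfl⟩ : ∃ m : ℕ, z = (m + 1 : ℕ) := ⟨z.toNat - 1, by omega⟩
      have h := congrArg (PowerSeries.coeff (m + 1)) (hrec c)
      rw [map_sub, mul_assoc, PowerSeries.coeff_C_mul, PowerSeries.coeff_succ_X_mul] at h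
      rw [show ((m + 1 : ℕ) : ℤ) - 1 = m by push_cast; ring]
      simp only [momentTable_natCast]
      linear_combination h

variable {r : ℕ} {α : ℕ → ℂ} {M : ℕ → ℤ → ℂ}

lemma IsMomentTable.shiftPairing_succ (hM : IsMomentTable r α M) (c : ℕ) (s : ℤ) (p : ℂ[X]) :
    shiftPairing (M (c + 1)) s p
      = shiftPairing (M c) s p + α c * shiftPairing (M (c + r + 1)) (s - 1) p := by
  rw [shiftPairing_eq_add _ _ _ _ (hM.succ c) s]
  rfl

def PairingVanishes (r : ℕ) (α : ℕ → ℂ) (M : ℕ → ℤ → ℂ) (n j : ℕ) : Prop :=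
  ∀ (c : ℕ) (s : ℤ), 1 ≤ c → 1 ≤ r * s + c - j → r * s + c - j ≤ n → 1 ≤ r * s + c - j + s →
    shiftPairing (M c) s (componentPoly r α n j) = 0

def PairingLeading (r : ℕ) (α : ℕ → ℂ) (M : ℕ → ℤ → ℂ) (n j : ℕ) : Prop :=
  ∀ (c : ℕ) (s : ℤ) (t : ℕ), 1 ≤ c → r * s + c - j = n + 1 → n + s = t →
    shiftPairing (M c) s (componentPoly r α n j) = ∏ i ∈ range t, α (c - 1 + r * i)

lemma pairingVanishes_zero (j : ℕ) : PairingVanishes r α M 0 j :=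
  fun _ _ _ h1 h2 _ => by omega

lemma PairingVanishes.succ_zero {n : ℕ} (hZr : PairingVanishes r α M n r)
    (hLr : PairingLeading r α M n r) (hZ0 : PairingVanishes r α M n 0)
    (hL0 : PairingLeading r α M n 0) : PairingVanishes r α M (n + 1) 0 := by
  intro c s hc h1 h2 h3
  have hshift : (r : ℤ) * (s + 1) = r * s + r := mul_add_one _ _
  rw [componentPoly, map_sub, shiftPairing_X_mul, C_mul', map_smul, smul_eq_mul]
  rcases h2.lt_or_eq with hlt | heq
  · rw [hZr c (s + 1) hc (by omega) (by omega) (by omega), hZ0 c s hc (by omega) (by omega)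
      (by omega), mul_zero, sub_zero]
  · obtain ⟨t, ht⟩ : ∃ t : ℕ, (n : ℤ) + s = t := ⟨(n + s).toNat, by omega⟩
    rw [hLr c (s + 1) (t + 1) hc (by push_cast at heq ⊢; omega) (by push_cast; omega),
      hL0 c s t hc (by push_cast at heq ⊢; omega) ht, prod_range_succ]
    have hlast : c - 1 + r * t = (r + 1) * n := by
      zify [hc]
      push_cast at heq
      linear_combination (↑r) * ht.symm + heq
    rw [hlast]
    ring

lemma PairingVanishes.succ_succ {n j : ℕ} (hZ : PairingVanishes r α M (n + 1) j)
    (hL : PairingLeading r α M (n + 1) j) (hZ' : PairingVanishes r α M n (j + 1))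
    (hL' : PairingLeading r α M n (j + 1)) : PairingVanishes r α M (n + 1) (j + 1) := by
  intro c s hc h1 h2 h3
  push_cast at h1 h2 h3
  rw [componentPoly, map_sub, C_mul', map_smul, smul_eq_mul]
  rcases h2.lt_or_eq with hlt | heq
  · rw [hZ c s hc (by omega) (by push_cast; omega) (by omega),
      hZ' c s hc (by push_cast; omega) (by push_cast; omega) (by push_cast; omega),
      mul_zero, sub_zero]
  · obtain ⟨t, ht⟩ : ∃ t : ℕ, (n : ℤ) + s = t := ⟨(n + s).toNat, by omega⟩
    rw [hL c s (t + 1) hc (by push_cast; omega) (by push_cast; omega),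
      hL' c s t hc (by push_cast; omega) ht, prod_range_succ]
    have hlast : c - 1 + r * t = (r + 1) * n + (j + 1) := by
      zify [hc]
      linear_combination (↑r) * ht.symm + heq
    rw [hlast]
    ring

lemma IsMomentTable.pairingLeading (hM : IsMomentTable r α M) (hr : 1 ≤ r) {n j : ℕ} (hj : j ≤ r)
    (hZ : PairingVanishes r α M n j) : PairingLeading r α M n j := by
  intro c s t hc hN ht
  induction t generalizing c s with
  | zero =>
    obtain ⟨hmon, hdeg⟩ := componentPoly_monic_natDegree r α n j
    rw [show s = -((componentPoly r α n j).natDegree : ℤ) by omega,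
      shiftPairing_of_monic _ (hM.of_neg c) (hM.at_zero c) hmon, prod_range_zero]
  | succ t ih =>
    obtain ⟨c, rfl⟩ : ∃ c', c = c' + 1 := ⟨c - 1, by omega⟩
    push_cast at hN ht
    have hfirst : shiftPairing (M c) s (componentPoly r α n j) = 0 := by
      rcases c.eq_zero_or_pos with rfl | hc
      · have hs : 1 ≤ s := by
          by_contra! hs
          have : (r : ℤ) * s ≤ 0 := mul_nonpos_of_nonneg_of_nonpos (by positivity) (by omega)
          omega
        exact shiftPairing_eq_zero _ _ (fun z hz => hM.zero_row z (by omega)) _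
      · have hn : 1 ≤ n := by
          by_contra! hn
          have : (r : ℤ) ≤ r * s := le_mul_of_one_le_right (by positivity) (by omega)
          omega
        exact hZ c s hc (by omega) (by omega) (by omega)
    rw [hM.shiftPairing_succ, hfirst, zero_add,
      ih (c + r + 1) (s - 1) (by omega) (by push_cast; linear_combination hN) (by omega),
      prod_range_succ']
    simp only [Nat.add_sub_cancel, mul_zero, add_zero]
    rw [mul_comm]
    congr 1
    exact prod_congr rfl fun i _ => by ring_nf

lemma IsMomentTable.pairingVanishes (hM : IsMomentTable r α M) (hr : 1 ≤ r) (n : ℕ) :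
    ∀ j, j ≤ r → PairingVanishes r α M n j := by
  induction n with
  | zero => exact fun j _ => pairingVanishes_zero j
  | succ n ih =>
    have hL : ∀ j, j ≤ r → PairingLeading r α M n j := fun j hj =>
      hM.pairingLeading hr hj (ih j hj)
    intro j
    induction j with
    | zero => exact fun _ => (ih r le_rfl).succ_zero (hL r le_rfl) (ih 0 r.zero_le) (hL 0 r.zero_le)
    | succ j ihj =>
      intro hj
      have hZ := ihj (by omega)
      exact hZ.succ_succ (hM.pairingLeading hr (by omega) hZ) (ih (j + 1) hj) (hL (j + 1) hj)

lemma IsMomentTable.shiftPairing_componentPoly_eq_zero (hM : IsMomentTable r α M) (hr : 1 ≤ r)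
    {n j c s : ℕ} (hj : j ≤ r) (hc : 1 ≤ c) (h1 : j + 1 ≤ r * s + c) (h2 : r * s + c ≤ n + j) :
    shiftPairing (M c) s (componentPoly r α n j) = 0 :=
  hM.pairingVanishes hr n j hj c s hc (by omega) (by omega) (by omega)

lemma IsMomentTable.shiftPairing_componentPoly_ne_zero (hM : IsMomentTable r α M) (hr : 1 ≤ r)
    (hα : ∀ k, α k ≠ 0) {n j c s : ℕ} (hj : j ≤ r) (hc : 1 ≤ c) (hN : r * s + c = n + 1 + j) :
    shiftPairing (M c) s (componentPoly r α n j) ≠ 0 := by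
  rw [hM.pairingLeading hr hj (hM.pairingVanishes hr n j hj) c s (n + s) hc (by omega)
    (by push_cast; ring)]
  exact prod_ne_zero_iff.mpr fun _ _ => hα _

lemma Vsys_apply_X_pow_mul {v : ℕ → LF} (hv : ∀ i < r, ∀ m : ℕ, v i (X ^ m) = M (i + 1) m)
    {i j : ℕ} (hj : j ≤ r) (hi : i < r) (k : ℕ) :
    ∃ c s : ℕ, 1 ≤ c ∧ r * s + c = r * k + i + j + 1 ∧
      ∀ p, Vsys r j v i (X ^ k * p) = shiftPairing (M c) s p := by
  unfold Vsys
  split_ifs with h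
  · exact ⟨j + i + 1, k, by omega, by omega,
      apply_X_pow_mul_eq_shiftPairing _ _ (hv _ h) k⟩
  · refine ⟨j + i - r + 1, k + 1, by omega, by rw [mul_add]; omega, fun p => ?_⟩
    rw [xMul, LinearMap.comp_apply, LinearMap.mulLeft_apply, ← mul_assoc, ← pow_succ',
      apply_X_pow_mul_eq_shiftPairing _ _ (hv _ (by omega))]

end BranchedStieltjes

open BranchedStieltjes in
theorem stmt13_general (r : ℕ) (hr : 1 ≤ r) (v : ℕ → LF)
    (g : ℕ → PowerSeries ℂ) (α : ℕ → ℂ)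
    (hgc : ∀ k, PowerSeries.constantCoeff (g k) = 1)
    (hα : ∀ k, α k ≠ 0)
    (hg0 : g 0 = 1)
    (hgj : ∀ j, 1 ≤ j → j ≤ r →
      g j = PowerSeries.mk fun n => v (j - 1) (Polynomial.X ^ n))
    (hrec : ∀ k, g (k + 1) - g k = PowerSeries.C (α k) * PowerSeries.X * g (k + r + 1))
    (P : ℕ → Polynomial ℂ)
    (hPinit : ∀ j, j ≤ r → P j = Polynomial.X ^ j)
    (hPrec : ∀ n, P (n + r + 1)
      = Polynomial.X * P (n + r) - Polynomial.C (α n) * P n) :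
    ∀ j, j ≤ r → ∃ Q : ℕ → Polynomial ℂ,
      (∀ n, P ((r + 1) * n + j)
        = Polynomial.X ^ j * (Q n).comp (Polynomial.X ^ (r + 1))) ∧
      rOrth r (Vsys r j v) Q := by
  intro j hj
  have hM := isMomentTable_momentTable hgc hg0 hrec
  have hmom : ∀ i < r, ∀ m : ℕ, v i (X ^ m) = momentTable g (i + 1) m := fun i hi m => by
    rw [momentTable_natCast, hgj (i + 1) (by omega) (by omega), PowerSeries.coeff_mk,
      Nat.add_sub_cancel]
  refine ⟨fun n => componentPoly r α n j,
    fun n => eq_X_pow_mul_componentPoly_comp hPinit hPrec n j hj,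
    fun n => componentPoly_monic_natDegree r α n j, fun k i n hi => ?_⟩
  obtain ⟨c, s, hc, hN, hV⟩ := Vsys_apply_X_pow_mul hmom hj hi k
  rw [hV]
  exact ⟨fun _ => hM.shiftPairing_componentPoly_eq_zero hr hj hc (by omega) (by omega),
    fun _ => hM.shiftPairing_componentPoly_ne_zero hr hα hj hc (by omega)⟩

theorem stmt13 (r : ℕ) (hr : 1 ≤ r) (v : ℕ → LF)
    (hv : ∀ j, j < r → v j (1 : Polynomial ℂ) = 1)
    (g : ℕ → PowerSeries ℂ) (α : ℕ → ℂ)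
    (hgc : ∀ k, PowerSeries.constantCoeff (g k) = 1)
    (hα : ∀ k, α k ≠ 0)
    (hg0 : g 0 = 1)
    (hgj : ∀ j, 1 ≤ j → j ≤ r →
      g j = PowerSeries.mk fun n => v (j - 1) (Polynomial.X ^ n))
    (hrec : ∀ k, g (k + 1) - g k = PowerSeries.C (α k) * PowerSeries.X * g (k + r + 1))
    (P : ℕ → Polynomial ℂ)
    (hPinit : ∀ j, j ≤ r → P j = Polynomial.X ^ j)
    (hPrec : ∀ n, P (n + r + 1)
      = Polynomial.X * P (n + r) - Polynomial.C (α n) * P n) :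
    ∀ j, j ≤ r → ∃ Q : ℕ → Polynomial ℂ,
      (∀ n, P ((r + 1) * n + j)
        = Polynomial.X ^ j * (Q n).comp (Polynomial.X ^ (r + 1))) ∧
      rOrth r (Vsys r j v) Q :=
  stmt13_general r hr v g α hgc hα hg0 hgj hrec P hPinit hPrec
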